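/- Let x = (x₁,x₂,x₃,x₄) ∈ ℂ⁴ and n = 1 + |x₁|² + |x₂|² + |x₃|² + |x₄|². With ⟨·,·⟩ the sesquilinear form determined by H₃(x), one has ⟨a₁(x), a₂(x)⟩ = 0, ⟨a₁(x), a₁(x)⟩ = c₁(x)/n and ⟨a₂(x), a₂(x)⟩ = c₂(x)/n, where c₁ = |x₁|²|x₂|²(1+|x₃|²) + |x₁|²|x₄|² + |x₃|²|x₄|²(1+|x₂|²) and c₂ = |x₁|²|x₃|²(1+|x₄|²) + |x₂|²|x₃|² + |x₂|²|x₄|²(1+|x₁|²). -/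

import Mathlib

/- STATEMENT 6: With respect to the metric h₃ (12×12 block matrix diag(G,G)),
the vectors a₁(x), a₂(x) satisfy ⟨a₁,a₂⟩ = 0, ⟨a₁,a₁⟩ = c₁/n, ⟨a₂,a₂⟩ = c₂/n.
Here x 0,…,x 3 stand for x₁,…,x₄. -/

noncomputable section

/-- n = 1 + Σ |x_i|², as a complex number. -/
def nC (x : Fin 4 → ℂ) : ℂ := 1 + ∑ i, star (x i) * x i

/-- q_{ij}(x) = δ_{ij} − conj(x_i)·x_j/n : the quotient metric h_Q in the frame v. -/
def qM (x : Fin 4 → ℂ) : Matrix (Fin 4) (Fin 4) ℂ :=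
  Matrix.of fun i j => (if i = j then 1 else 0) - star (x i) * x j / nC x

/-- The ordered index pairs P₁=(1,2), P₂=(1,3), P₃=(1,4), P₄=(2,3), P₅=(2,4), P₆=(3,4)
(0-indexed). -/
def pairs : Fin 6 → Fin 4 × Fin 4 := ![(0,1), (0,2), (0,3), (1,2), (1,3), (2,3)]

/-- The 6×6 matrix G(x) of the induced metric Λ²h_Q in the frame u. -/
def G6 (x : Fin 4 → ℂ) : Matrix (Fin 6) (Fin 6) ℂ :=
  Matrix.of fun p q =>
    qM x (pairs p).1 (pairs q).1 * qM x (pairs p).2 (pairs q).2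
      - qM x (pairs p).1 (pairs q).2 * qM x (pairs p).2 (pairs q).1

/-- The 12×12 block-diagonal matrix H₃(x) = diag(G(x),G(x)). -/
def H3 (x : Fin 4 → ℂ) : Matrix (Fin 12) (Fin 12) ℂ :=
  Matrix.of fun p q =>
    (Matrix.fromBlocks (G6 x) 0 0 (G6 x)) (finSumFinEquiv.symm p) (finSumFinEquiv.symm q)

/-- The sesquilinear form ⟨u,w⟩ = Σ_{p,q} u_p (H₃)_{pq} conj(w_q). -/
def form (x : Fin 4 → ℂ) (u w : Fin 12 → ℂ) : ℂ :=
  ∑ p : Fin 12, ∑ q : Fin 12, u p * H3 x p q * star (w q)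

def a1 (x : Fin 4 → ℂ) : Fin 12 → ℂ :=
  ![x 0 * x 1, 0, x 0 * x 3, 0, 0, x 2 * x 3, 0, 0, 0, 0, 0, 0]

def a2 (x : Fin 4 → ℂ) : Fin 12 → ℂ :=
  ![0, 0, 0, 0, 0, 0, 0, x 0 * x 2, 0, x 1 * x 2, x 1 * x 3, 0]

/-!
`H₃` is block diagonal and `a₁`, `a₂` are supported in different blocks, so `⟨a₁, a₂⟩ = 0` and
each of `⟨a₁, a₁⟩`, `⟨a₂, a₂⟩` is computed in a single copy of `G`. Writing `v ∈ ℂ⁶` as an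
antisymmetric `4 × 4` matrix `V`, the form of `G = Λ²(I - x̄ xᵀ / n)` is
`v · w̄ - (V x̄) · conj (W x̄) / n`: the `1 / n²` term carries the factor `x̄ᵀ V x̄ = 0`.
For `a₁`, `a₂` this equals `c₁ / n`, `c₂ / n` once `n = 1 + Σ |xᵢ|²` is expanded.
-/

open Matrix

theorem nC_ne_zero (x : Fin 4 → ℂ) : nC x ≠ 0 := by
  have h : nC x = ((1 + ∑ i, Complex.normSq (x i) : ℝ) : ℂ) := by
    simp [nC, Complex.normSq_eq_conj_mul_self]
  rw [h]
  exact_mod_cast (add_pos_of_pos_of_nonneg one_pos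
    (Finset.sum_nonneg fun i _ => Complex.normSq_nonneg (x i))).ne'

theorem sum_sum_mul_fromBlocks_zero_zero {R : Type*} [NonUnitalNonAssocSemiring R] [Star R]
    {m n : ℕ} (A : Matrix (Fin m) (Fin m) R) (D : Matrix (Fin n) (Fin n) R) (u w : Fin (m + n) → R) :
    ∑ p, ∑ q, u p * fromBlocks A 0 0 D (finSumFinEquiv.symm p) (finSumFinEquiv.symm q) * star (w q) =
      (∑ p, ∑ q, u (Fin.castAdd n p) * A p q * star (w (Fin.castAdd n q))) +
        ∑ p, ∑ q, u (Fin.natAdd m p) * D p q * star (w (Fin.natAdd m q)) := by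
  simp [Fin.sum_univ_add, Finset.sum_add_distrib]

def formG6 (x : Fin 4 → ℂ) (v w : Fin 6 → ℂ) : ℂ :=
  ∑ p, ∑ q, v p * G6 x p q * star (w q)

theorem form_eq_formG6_add (x : Fin 4 → ℂ) (u w : Fin 12 → ℂ) :
    form x u w = formG6 x (fun p => u (Fin.castAdd 6 p)) (fun q => w (Fin.castAdd 6 q)) +
      formG6 x (fun p => u (Fin.natAdd 6 p)) (fun q => w (Fin.natAdd 6 q)) :=
  sum_sum_mul_fromBlocks_zero_zero (G6 x) (G6 x) u w

theorem formG6_zero_left (x : Fin 4 → ℂ) (w : Fin 6 → ℂ) : formG6 x 0 w = 0 := by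
  simp [formG6]

theorem formG6_zero_right (x : Fin 4 → ℂ) (v : Fin 6 → ℂ) : formG6 x v 0 = 0 := by
  simp [formG6]

/-- The antisymmetric matrix `V` with `V i j = v p` when `P_p = (i, j)`. -/
def skewOfPairs (v : Fin 6 → ℂ) : Matrix (Fin 4) (Fin 4) ℂ :=
  !![0, v 0, v 1, v 2; -v 0, 0, v 3, v 4; -v 1, -v 3, 0, v 5; -v 2, -v 4, -v 5, 0]

theorem formG6_eq (x : Fin 4 → ℂ) (v w : Fin 6 → ℂ) :
    formG6 x v w =
      v ⬝ᵥ star w - (skewOfPairs v *ᵥ star x) ⬝ᵥ star (skewOfPairs w *ᵥ star x) / nC x := by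
  simp only [formG6, G6, qM, pairs, skewOfPairs, Fin.sum_univ_six, Fin.sum_univ_four, dotProduct,
    mulVec, of_apply, cons_val, Pi.star_apply, star_add, star_mul', star_neg, star_star, star_zero,
    Fin.isValue, Fin.reduceEq, ↓reduceIte]
  ring

theorem formG6_self_eq_div (x : Fin 4 → ℂ) (v : Fin 6 → ℂ) :
    formG6 x v v =
      (nC x * (v ⬝ᵥ star v) - (skewOfPairs v *ᵥ star x) ⬝ᵥ star (skewOfPairs v *ᵥ star x)) /
        nC x := by
  rw [formG6_eq, sub_div, mul_div_cancel_left₀ _ (nC_ne_zero x)]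

theorem a1_castAdd (x : Fin 4 → ℂ) :
    (fun p => a1 x (Fin.castAdd 6 p)) = ![x 0 * x 1, 0, x 0 * x 3, 0, 0, x 2 * x 3] := by
  ext p; fin_cases p <;> rfl

theorem a1_natAdd (x : Fin 4 → ℂ) : (fun p : Fin 6 => a1 x (Fin.natAdd 6 p)) = 0 := by
  ext p; fin_cases p <;> rfl

theorem a2_castAdd (x : Fin 4 → ℂ) : (fun p => a2 x (Fin.castAdd 6 p)) = 0 := by
  ext p; fin_cases p <;> rfl

theorem a2_natAdd (x : Fin 4 → ℂ) :
    (fun p => a2 x (Fin.natAdd 6 p)) = ![0, x 0 * x 2, 0, x 1 * x 2, x 1 * x 3, 0] := by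
  ext p; fin_cases p <;> rfl

theorem form_a1_a2 (x : Fin 4 → ℂ) : form x (a1 x) (a2 x) = 0 := by
  rw [form_eq_formG6_add, a1_natAdd, a2_castAdd, formG6_zero_left, formG6_zero_right,
    add_zero]

theorem form_a1_a1 (x : Fin 4 → ℂ) : form x (a1 x) (a1 x) =
    (star (x 0) * x 0 * (star (x 1) * x 1) * (1 + star (x 2) * x 2)
      + star (x 0) * x 0 * (star (x 3) * x 3)
      + star (x 2) * x 2 * (star (x 3) * x 3) * (1 + star (x 1) * x 1)) / nC x := by
  rw [form_eq_formG6_add, a1_castAdd, a1_natAdd, formG6_zero_left, add_zero,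
    formG6_self_eq_div]
  congr 1
  simp only [nC, skewOfPairs, Fin.sum_univ_six, Fin.sum_univ_four, dotProduct, mulVec, of_apply,
    cons_val, Pi.star_apply, star_add, star_mul', star_neg, star_star, star_zero, Fin.isValue]
  ring

theorem form_a2_a2 (x : Fin 4 → ℂ) : form x (a2 x) (a2 x) =
    (star (x 0) * x 0 * (star (x 2) * x 2) * (1 + star (x 3) * x 3)
      + star (x 1) * x 1 * (star (x 2) * x 2)
      + star (x 1) * x 1 * (star (x 3) * x 3) * (1 + star (x 0) * x 0)) / nC x := by
  rw [form_eq_formG6_add, a2_castAdd, a2_natAdd, formG6_zero_left, zero_add,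
    formG6_self_eq_div]
  congr 1
  simp only [nC, skewOfPairs, Fin.sum_univ_six, Fin.sum_univ_four, dotProduct, mulVec, of_apply,
    cons_val, Pi.star_apply, star_add, star_mul', star_neg, star_star, star_zero, Fin.isValue]
  ring

theorem horrocks_mumford_stmt6 (x : Fin 4 → ℂ) :
    form x (a1 x) (a2 x) = 0 ∧
    form x (a1 x) (a1 x) =
      (star (x 0) * x 0 * (star (x 1) * x 1) * (1 + star (x 2) * x 2)
        + star (x 0) * x 0 * (star (x 3) * x 3)
        + star (x 2) * x 2 * (star (x 3) * x 3) * (1 + star (x 1) * x 1)) / nC x ∧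
    form x (a2 x) (a2 x) =
      (star (x 0) * x 0 * (star (x 2) * x 2) * (1 + star (x 3) * x 3)
        + star (x 1) * x 1 * (star (x 2) * x 2)
        + star (x 1) * x 1 * (star (x 3) * x 3) * (1 + star (x 0) * x 0)) / nC x :=
  ⟨form_a1_a2 x, form_a1_a1 x, form_a2_a2 x⟩
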